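/- Let X be a real Hilbert space and let T : X → X be a continuous linear nonexpansive operator with F := Fix T. Let (λ_n) be a sequence in [0,1] with ∑_{n∈ℕ} (1−λ_n)λ_n = +∞, let x_0 ∈ X, and define x_{n+1} := (1−λ_n)x_n + λ_n T x_n for all n. Then (x_n) converges strongly to P_F x_0, the orthogonal projection of x_0 onto F. -/

import Mathlib

open Filter Topology

/-!
Write `xₙ = Sₙ x₀` with `Sₙ = T_{λₙ₋₁} ⋯ T_{λ₀}`; the `Sₙ` are linear contractions commuting
with `T` and fixing `F = Fix T` pointwise. For `x₀ = a - T a` in the range of `Id - T`, the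
inequality `‖T_λ y‖² + λ(1-λ)‖y - T y‖² ≤ ‖y‖²` summed along the orbit of `a` gives
`∑ λₙ(1-λₙ)‖Sₙ(a - T a)‖² ≤ ‖a‖²`; since `‖Sₙ(a - T a)‖` is nonincreasing and
`∑ λₙ(1-λₙ) = ∞`, it tends to `0`. Nonexpansiveness forces `(range (Id - T))ᗮ ≤ F`, so that
range is dense in `Fᗮ`, and equicontinuity of the `Sₙ` gives `Sₙ → 0` on all of `Fᗮ`.
Splitting `x₀ = P_F x₀ + (x₀ - P_F x₀)` finishes the proof.
-/

theorem Antitone.tendsto_zero_of_summable_mul {c d : ℕ → ℝ} (hd : Antitone d)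
    (hd_nonneg : ∀ n, 0 ≤ d n) (hc_nonneg : ∀ n, 0 ≤ c n) (hc : ¬ Summable c)
    (hcd : Summable fun n => c n * d n) : Tendsto d atTop (𝓝 0) := by
  have hbdd : BddBelow (Set.range d) := ⟨0, Set.forall_mem_range.mpr hd_nonneg⟩
  have hlim : Tendsto d atTop (𝓝 (⨅ n, d n)) := tendsto_atTop_ciInf hd hbdd
  suffices h : ⨅ n, d n = 0 by rwa [h] at hlim
  refine le_antisymm (not_lt.mp fun hpos => hc ?_) (le_ciInf hd_nonneg)
  refine (hcd.div_const (⨅ n, d n)).of_nonneg_of_le hc_nonneg fun n => ?_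
  rw [le_div_iff₀ hpos]
  exact mul_le_mul_of_nonneg_left (ciInf_le hbdd n) (hc_nonneg n)

section NormedSpace

variable {X : Type*} [NormedAddCommGroup X] [NormedSpace ℝ X]

def relaxation (T : X →L[ℝ] X) (l : ℝ) : X →L[ℝ] X :=
  (1 - l) • ContinuousLinearMap.id ℝ X + l • T

def kmIterate (T : X →L[ℝ] X) (lam : ℕ → ℝ) : ℕ → X →L[ℝ] X
  | 0 => ContinuousLinearMap.id ℝ X
  | n + 1 => relaxation T (lam n) * kmIterate T lam n

variable (T : X →L[ℝ] X) (lam : ℕ → ℝ)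

@[simp]
theorem relaxation_apply (l : ℝ) (v : X) : relaxation T l v = (1 - l) • v + l • T v := rfl

@[simp]
theorem kmIterate_zero_apply (v : X) : kmIterate T lam 0 v = v := rfl

theorem kmIterate_succ_apply (n : ℕ) (v : X) :
    kmIterate T lam (n + 1) v = relaxation T (lam n) (kmIterate T lam n v) := rfl

theorem eq_kmIterate_apply {x : ℕ → X}
    (hx : ∀ n, x (n + 1) = (1 - lam n) • x n + lam n • T (x n)) (n : ℕ) :
    x n = kmIterate T lam n (x 0) := by
  induction n with
  | zero => rfl
  | succ n ih => rw [hx, kmIterate_succ_apply, relaxation_apply, ← ih]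

theorem kmIterate_apply_of_apply_eq_self {p : X} (hp : T p = p) (n : ℕ) :
    kmIterate T lam n p = p := by
  induction n with
  | zero => rfl
  | succ n ih => rw [kmIterate_succ_apply, ih, relaxation_apply, hp, ← add_smul, sub_add_cancel,
      one_smul]

theorem commute_kmIterate (n : ℕ) : Commute T (kmIterate T lam n) := by
  induction n with
  | zero => exact (Commute.one_right T :)
  | succ n ih =>
    refine Commute.mul_right ?_ ih
    exact ((Commute.one_right T).smul_right _).add_right ((Commute.refl T).smul_right _)

variable {T lam}

theorem norm_relaxation_apply_le (hT : ∀ x : X, ‖T x‖ ≤ ‖x‖) {l : ℝ}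
    (hl : l ∈ Set.Icc (0 : ℝ) 1) (v : X) : ‖relaxation T l v‖ ≤ ‖v‖ := by
  obtain ⟨hl₀, hl₁⟩ := hl
  calc ‖relaxation T l v‖ ≤ (1 - l) * ‖v‖ + l * ‖T v‖ := by
        rw [relaxation_apply]
        refine (norm_add_le _ _).trans_eq ?_
        rw [norm_smul_of_nonneg (by linarith), norm_smul_of_nonneg hl₀]
    _ ≤ (1 - l) * ‖v‖ + l * ‖v‖ := by gcongr; exact hT v
    _ = ‖v‖ := by ring

theorem antitone_norm_kmIterate_apply (hT : ∀ x : X, ‖T x‖ ≤ ‖x‖)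
    (hlam : ∀ n, lam n ∈ Set.Icc (0 : ℝ) 1) (v : X) :
    Antitone fun n => ‖kmIterate T lam n v‖ :=
  antitone_nat_of_succ_le fun n => norm_relaxation_apply_le hT (hlam n) _

theorem norm_kmIterate_le (hT : ∀ x : X, ‖T x‖ ≤ ‖x‖)
    (hlam : ∀ n, lam n ∈ Set.Icc (0 : ℝ) 1) (n : ℕ) : ‖kmIterate T lam n‖ ≤ 1 :=
  ContinuousLinearMap.opNorm_le_bound _ zero_le_one fun v => by
    simpa using antitone_norm_kmIterate_apply hT hlam v (Nat.zero_le n)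

end NormedSpace

section InnerProductSpace

variable {X : Type*} [NormedAddCommGroup X] [InnerProductSpace ℝ X]

theorem norm_one_sub_smul_add_smul_sq (l : ℝ) (a b : X) :
    ‖(1 - l) • a + l • b‖ ^ 2
      = (1 - l) * ‖a‖ ^ 2 + l * ‖b‖ ^ 2 - l * (1 - l) * ‖a - b‖ ^ 2 := by
  rw [norm_add_sq_real, norm_sub_sq_real, real_inner_smul_left, real_inner_smul_right,
    norm_smul, norm_smul, mul_pow, mul_pow, Real.norm_eq_abs, Real.norm_eq_abs, sq_abs, sq_abs]
  ring

variable {T : X →L[ℝ] X} {lam : ℕ → ℝ}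

theorem norm_relaxation_apply_sq_add_le (hT : ∀ x : X, ‖T x‖ ≤ ‖x‖) {l : ℝ}
    (hl : 0 ≤ l) (v : X) : ‖relaxation T l v‖ ^ 2 + l * (1 - l) * ‖v - T v‖ ^ 2 ≤ ‖v‖ ^ 2 := by
  have hTv : ‖T v‖ ^ 2 ≤ ‖v‖ ^ 2 := pow_le_pow_left₀ (norm_nonneg _) (hT v) 2
  rw [relaxation_apply, norm_one_sub_smul_add_smul_sq]
  nlinarith

theorem sum_mul_norm_kmIterate_apply_sub_sq_le (hT : ∀ x : X, ‖T x‖ ≤ ‖x‖)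
    (hlam : ∀ n, 0 ≤ lam n) (v : X) (n : ℕ) :
    ∑ k ∈ Finset.range n,
        lam k * (1 - lam k) * ‖kmIterate T lam k v - T (kmIterate T lam k v)‖ ^ 2
      ≤ ‖v‖ ^ 2 - ‖kmIterate T lam n v‖ ^ 2 := by
  induction n with
  | zero => simp
  | succ n ih =>
    have hstep := norm_relaxation_apply_sq_add_le hT (hlam n) (kmIterate T lam n v)
    rw [Finset.sum_range_succ, kmIterate_succ_apply]
    linarith

theorem tendsto_kmIterate_apply_sub_apply (hT : ∀ x : X, ‖T x‖ ≤ ‖x‖)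
    (hlam : ∀ n, lam n ∈ Set.Icc (0 : ℝ) 1) (hdiv : ¬ Summable fun n => (1 - lam n) * lam n)
    (v : X) : Tendsto (fun n => kmIterate T lam n (v - T v)) atTop (𝓝 0) := by
  have hcomm (n : ℕ) : kmIterate T lam n (v - T v)
      = kmIterate T lam n v - T (kmIterate T lam n v) := by
    rw [map_sub]
    exact congrArg _ (DFunLike.congr_fun (commute_kmIterate T lam n).eq v).symm
  have hsq : Tendsto (fun n => ‖kmIterate T lam n (v - T v)‖ ^ 2) atTop (𝓝 0) := by
    refine Antitone.tendsto_zero_of_summable_mul (c := fun n => lam n * (1 - lam n))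
      (fun m n hmn => pow_le_pow_left₀ (norm_nonneg _)
        (antitone_norm_kmIterate_apply hT hlam _ hmn) 2)
      (fun n => sq_nonneg _) (fun n => mul_nonneg (hlam n).1 (sub_nonneg.2 (hlam n).2))
      (by simpa only [mul_comm] using hdiv) ?_
    refine summable_of_sum_range_le (c := ‖v‖ ^ 2)
      (fun n => mul_nonneg (mul_nonneg (hlam n).1 (sub_nonneg.2 (hlam n).2)) (sq_nonneg _))
      fun n => ?_
    simp only [hcomm]
    exact (sum_mul_norm_kmIterate_apply_sub_sq_le hT (fun k => (hlam k).1) v n).trans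
      (sub_le_self _ (sq_nonneg _))
  have hnorm := (Real.continuous_sqrt.tendsto 0).comp hsq
  simp only [Function.comp_def, Real.sqrt_sq (norm_nonneg _), Real.sqrt_zero] at hnorm
  exact tendsto_zero_iff_norm_tendsto_zero.mpr hnorm

theorem orthogonal_range_id_sub_le_ker (hT : ∀ x : X, ‖T x‖ ≤ ‖x‖) :
    (LinearMap.range ((ContinuousLinearMap.id ℝ X - T : X →L[ℝ] X) : X →ₗ[ℝ] X))ᗮ
      ≤ LinearMap.ker ((ContinuousLinearMap.id ℝ X - T : X →L[ℝ] X) : X →ₗ[ℝ] X) := by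
  intro v hv
  have horth : inner ℝ (v - T v) v = 0 := hv _ (LinearMap.mem_range_self _ v)
  -- `⟪T v, v⟫ = ‖v‖²` together with `‖T v‖ ≤ ‖v‖` is the equality case of Cauchy–Schwarz.
  have hfix : T v = v := by
    refine eq_of_norm_le_re_inner_eq_norm_sq (𝕜 := ℝ) (hT v) ?_
    rw [inner_sub_left, sub_eq_zero, real_inner_self_eq_norm_sq] at horth
    simpa using horth.symm
  simp [hfix]

variable [CompleteSpace X]

theorem tendsto_kmIterate_apply_of_mem_orthogonal_ker (hT : ∀ x : X, ‖T x‖ ≤ ‖x‖)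
    (hlam : ∀ n, lam n ∈ Set.Icc (0 : ℝ) 1) (hdiv : ¬ Summable fun n => (1 - lam n) * lam n)
    {v : X}
    (hv : v ∈ (LinearMap.ker ((ContinuousLinearMap.id ℝ X - T : X →L[ℝ] X) : X →ₗ[ℝ] X))ᗮ) :
    Tendsto (fun n => kmIterate T lam n v) atTop (𝓝 0) := by
  have hdense : v ∈ closure (LinearMap.range
      ((ContinuousLinearMap.id ℝ X - T : X →L[ℝ] X) : X →ₗ[ℝ] X) : Set X) := by
    have := Submodule.orthogonal_le (orthogonal_range_id_sub_le_ker hT) hv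
    rwa [Submodule.orthogonal_orthogonal_eq_closure] at this
  have hequi : Equicontinuous fun n => (kmIterate T lam n : X → X) :=
    (LipschitzWith.uniformEquicontinuous _ 1 fun n => (kmIterate T lam n).lipschitz.weaken
      (by exact_mod_cast norm_kmIterate_le hT hlam n)).equicontinuous
  have hclosed := hequi.isClosed_setOfPred_tendsto (l := atTop) (f := fun _ => (0 : X))
    continuous_const
  refine hclosed.closure_subset_iff.mpr ?_ hdense
  rintro _ ⟨w, rfl⟩
  exact tendsto_kmIterate_apply_sub_apply hT hlam hdiv w

theorem tendsto_kmIterate_apply_starProjection (hT : ∀ x : X, ‖T x‖ ≤ ‖x‖)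
    (hlam : ∀ n, lam n ∈ Set.Icc (0 : ℝ) 1) (hdiv : ¬ Summable fun n => (1 - lam n) * lam n)
    (v : X) :
    Tendsto (fun n => kmIterate T lam n v) atTop
      (𝓝 ((LinearMap.ker ((ContinuousLinearMap.id ℝ X - T : X →L[ℝ] X) : X →ₗ[ℝ] X)).starProjection
        v)) := by
  set F := LinearMap.ker ((ContinuousLinearMap.id ℝ X - T : X →L[ℝ] X) : X →ₗ[ℝ] X)
  have hmem : F.starProjection v - T (F.starProjection v) = 0 := F.starProjection_apply_mem v
  have hfix : T (F.starProjection v) = F.starProjection v := (sub_eq_zero.mp hmem).symm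
  have hsplit (n : ℕ) : kmIterate T lam n v
      = F.starProjection v + kmIterate T lam n (v - F.starProjection v) := by
    rw [map_sub, kmIterate_apply_of_apply_eq_self T lam hfix, add_sub_cancel]
  have hlim := (tendsto_const_nhds (x := F.starProjection v)).add
    (tendsto_kmIterate_apply_of_mem_orthogonal_ker hT hlam hdiv
      (F.sub_starProjection_mem_orthogonal v))
  rw [add_zero] at hlim
  exact hlim.congr fun n => (hsplit n).symm

end InnerProductSpace

/-- **Main result.** If `T` is a continuous linear nonexpansive operator on a real Hilbert
space, `(λₙ)` lies in `[0,1]` with `∑ (1-λₙ)λₙ = +∞`, and `xₙ₊₁ = (1-λₙ)xₙ + λₙ T xₙ`,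
then `(xₙ)` converges strongly to the orthogonal projection of `x₀` onto
`F := Fix T = ker (Id - T)`. -/
theorem km_linear_strong_convergence
    {X : Type*} [NormedAddCommGroup X] [InnerProductSpace ℝ X] [CompleteSpace X]
    (T : X →L[ℝ] X) (hT : ∀ x : X, ‖T x‖ ≤ ‖x‖)
    (lam : ℕ → ℝ) (hlam : ∀ n, lam n ∈ Set.Icc (0 : ℝ) 1)
    (hdiv : ¬ Summable (fun n => (1 - lam n) * lam n))
    (x : ℕ → X) (hx : ∀ n, x (n + 1) = (1 - lam n) • x n + lam n • T (x n)) :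
    Tendsto x atTop
      (𝓝 (Submodule.orthogonalProjectionOnto (LinearMap.ker ((ContinuousLinearMap.id ℝ X - T : X →L[ℝ] X) : X →ₗ[ℝ] X)) (x 0) : X)) := by
  rw [funext (eq_kmIterate_apply T lam hx), Submodule.coe_orthogonalProjectionOnto_apply]
  exact tendsto_kmIterate_apply_starProjection hT hlam hdiv (x 0)
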